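/- Let μ be a compactly supported Borel measure finite on dyadic cubes and {b̃_Q} an L^∞(μ)-accretive system with constants δ < 1 < C, i.e., |∫_Q b̃_Q dμ| ≥ δ μ(Q) and ‖b̃_Q‖_{L^∞(μ)} ≤ C. For a cube R, let 𝒟¹(R) be the collection of maximal dyadic cubes Q ⊊ R with |∫_Q b̃_R dμ| < δ² μ(Q). Then ∑_{Q ∈ 𝒟¹(R)} μ(Q) ≤ τ' μ(R) for some constant τ' < 1 depending only on δ and C (in fact one can take τ' comparable to (C−δ)/(C−δ²)). -/

import Mathlib

open MeasureTheory Filter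
open scoped ENNReal

/-- A dyadic cube in `ℝⁿ`, encoded by its generation `k` (side length `2 ^ k`)
and position `m` (corner at `m * 2 ^ k`). -/
structure DyadicCube (n : ℕ) where
  k : ℤ
  m : Fin n → ℤ

namespace DyadicCube

variable {n : ℕ}

/-- The underlying half-open cube in `ℝⁿ`. -/
def toSet (Q : DyadicCube n) : Set (Fin n → ℝ) :=
  {x | ∀ i, (Q.m i : ℝ) * (2 : ℝ) ^ Q.k ≤ x i ∧ x i < ((Q.m i : ℝ) + 1) * (2 : ℝ) ^ Q.k}

/-- The side length `ℓ(Q)` of the cube. -/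
noncomputable def len (Q : DyadicCube n) : ℝ := (2 : ℝ) ^ Q.k

/-- The dyadic parent `Q^{(1)}`. -/
def parent (Q : DyadicCube n) : DyadicCube n :=
  ⟨Q.k + 1, fun i => Int.fdiv (Q.m i) 2⟩

/-- The ancestor `Q^{(r)}` of order `r`. -/
def iterParent (Q : DyadicCube n) (r : ℕ) : DyadicCube n := parent^[r] Q

/-- The dyadic child of `Q` indexed by `ε : Fin n → Bool`. -/
def child (Q : DyadicCube n) (ε : Fin n → Bool) : DyadicCube n :=
  ⟨Q.k - 1, fun i => 2 * Q.m i + (if ε i then 1 else 0)⟩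

/-- The descendant of `Q` of order `r` indexed by `v`; these enumerate `ch^r Q`. -/
def childIter (Q : DyadicCube n) (r : ℕ) (v : Fin n → Fin (2 ^ r)) : DyadicCube n :=
  ⟨Q.k - r, fun i => 2 ^ r * Q.m i + ((v i : ℕ) : ℤ)⟩

instance : Countable (DyadicCube n) := by
  have h : Function.Injective (fun Q : DyadicCube n => (Q.k, Q.m)) := by
    rintro ⟨k, m⟩ ⟨k', m'⟩ h
    simpa using h
  exact h.countable

lemma measurableSet_toSet (Q : DyadicCube n) : MeasurableSet Q.toSet := by
  have : Q.toSet = Set.univ.pi (fun i =>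
      Set.Ico ((Q.m i : ℝ) * 2 ^ Q.k) (((Q.m i : ℝ) + 1) * 2 ^ Q.k)) := by
    ext x; simp [toSet, Set.mem_pi]
  rw [this]
  exact MeasurableSet.univ_pi fun i => measurableSet_Ico

lemma Ico_nest {k k' m m' : ℤ} (hk : k ≤ k') {x : ℝ}
    (h1 : (m : ℝ) * 2 ^ k ≤ x ∧ x < ((m : ℝ) + 1) * 2 ^ k)
    (h2 : (m' : ℝ) * 2 ^ k' ≤ x ∧ x < ((m' : ℝ) + 1) * 2 ^ k') :
    ∀ y : ℝ, (m : ℝ) * 2 ^ k ≤ y → y < ((m : ℝ) + 1) * 2 ^ k →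
      (m' : ℝ) * 2 ^ k' ≤ y ∧ y < ((m' : ℝ) + 1) * 2 ^ k' := by
  set d : ℕ := (k' - k).toNat with hd
  have hpow : (2 : ℝ) ^ k' = ((2 ^ d : ℤ) : ℝ) * 2 ^ k := by
    push_cast
    rw [← zpow_natCast (2:ℝ) d, ← zpow_add₀ (two_ne_zero)]
    congr 1
    omega
  have hP : (0 : ℝ) < 2 ^ k := zpow_pos two_pos _
  -- integer inequalities
  have hA : (m : ℝ) < ((m' + 1) * 2 ^ d : ℤ) := by
    have := lt_of_le_of_lt h1.1 h2.2
    rw [hpow] at this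
    push_cast at this ⊢
    nlinarith
  have hA' : m + 1 ≤ (m' + 1) * 2 ^ d := by exact_mod_cast Int.lt_iff_add_one_le.mp (by exact_mod_cast hA)
  have hB : ((m' * 2 ^ d : ℤ) : ℝ) < (m : ℝ) + 1 := by
    have := lt_of_le_of_lt h2.1 h1.2
    rw [hpow] at this
    push_cast at this ⊢
    nlinarith
  have hB' : m' * 2 ^ d ≤ m := by
    have : (m' * 2 ^ d : ℤ) < m + 1 := by exact_mod_cast hB
    omega
  intro y hy1 hy2
  constructor
  · rw [hpow]
    have : ((m' * 2 ^ d : ℤ) : ℝ) * 2 ^ k ≤ (m : ℝ) * 2 ^ k := by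
      have : ((m' * 2 ^ d : ℤ) : ℝ) ≤ (m : ℝ) := by exact_mod_cast hB'
      nlinarith
    push_cast at this ⊢
    nlinarith
  · rw [hpow]
    have : ((m : ℝ) + 1) * 2 ^ k ≤ (((m' + 1) * 2 ^ d : ℤ) : ℝ) * 2 ^ k := by
      have : ((m : ℝ) + 1) ≤ (((m' + 1) * 2 ^ d : ℤ) : ℝ) := by exact_mod_cast hA'
      nlinarith
    push_cast at this ⊢
    nlinarith

lemma toSet_nest {Q Q' : DyadicCube n} (hk : Q.k ≤ Q'.k) {x : Fin n → ℝ}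
    (hx : x ∈ Q.toSet) (hx' : x ∈ Q'.toSet) : Q.toSet ⊆ Q'.toSet := by
  intro y hy i
  exact Ico_nest hk (hx i) (hx' i) (y i) (hy i).1 (hy i).2

lemma toSet_inj {Q Q' : DyadicCube n} [Nonempty (Fin n)] {x : Fin n → ℝ}
    (hx : x ∈ Q.toSet) (h : Q.toSet = Q'.toSet) : Q = Q' := by
  have hx' : x ∈ Q'.toSet := h ▸ hx
  have hIco : ∀ i, Set.Ico ((Q.m i : ℝ) * 2 ^ Q.k) (((Q.m i : ℝ) + 1) * 2 ^ Q.k)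
      = Set.Ico ((Q'.m i : ℝ) * 2 ^ Q'.k) (((Q'.m i : ℝ) + 1) * 2 ^ Q'.k) := by
    intro i
    ext t
    constructor
    · intro ht
      have hmem : Function.update x i t ∈ Q.toSet := by
        intro j
        rcases eq_or_ne j i with rfl | hji
        · simpa using ht
        · simpa [Function.update_of_ne hji] using hx j
      rw [h] at hmem
      have := hmem i
      simpa using this
    · intro ht
      have hmem : Function.update x i t ∈ Q'.toSet := by
        intro j
        rcases eq_or_ne j i with rfl | hji
        · simpa using ht
        · simpa [Function.update_of_ne hji] using hx' j
      rw [← h] at hmem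
      have := hmem i
      simpa using this
  have hP : (0 : ℝ) < 2 ^ Q.k := zpow_pos two_pos _
  have hP' : (0 : ℝ) < 2 ^ Q'.k := zpow_pos two_pos _
  have key : ∀ i, (Q.m i : ℝ) * 2 ^ Q.k = (Q'.m i : ℝ) * 2 ^ Q'.k ∧
      ((Q.m i : ℝ) + 1) * 2 ^ Q.k = ((Q'.m i : ℝ) + 1) * 2 ^ Q'.k := by
    intro i
    have := (Set.Ico_eq_Ico_iff (Or.inl (by nlinarith))).mp (hIco i)
    exact this
  obtain ⟨i⟩ := ‹Nonempty (Fin n)›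
  have hk : Q.k = Q'.k := by
    have h1 := (key i).1
    have h2 := (key i).2
    have : (2 : ℝ) ^ Q.k = 2 ^ Q'.k := by nlinarith
    exact zpow_right_injective₀ two_pos (by norm_num) this
  have hm : Q.m = Q'.m := by
    funext j
    have h1 := (key j).1
    rw [hk] at h1
    have : (Q.m j : ℝ) = Q'.m j := by
      have hP' : (0 : ℝ) < 2 ^ Q'.k := zpow_pos two_pos _
      exact mul_right_cancel₀ (ne_of_gt hP') h1
    exact_mod_cast this
  cases Q; cases Q'
  simp_all

end DyadicCube

variable {n : ℕ}

/-- The `μ`-average of `f` over a dyadic cube (zero when the cube is `μ`-null). -/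
noncomputable def avg (μ : Measure (Fin n → ℝ)) (f : (Fin n → ℝ) → ℝ) (Q : DyadicCube n) : ℝ :=
  if μ Q.toSet = 0 then 0 else (∫ x in Q.toSet, f x ∂μ) / (μ Q.toSet).toReal

/-- The expectation `E^b_Q f = (⟨f⟩_Q / ⟨b⟩_Q) · b · 1_Q` adapted to an accretive function `b`. -/
noncomputable def Eb (μ : Measure (Fin n → ℝ)) (b f : (Fin n → ℝ) → ℝ) (Q : DyadicCube n) :
    (Fin n → ℝ) → ℝ :=
  fun x => (avg μ f Q / avg μ b Q) * Q.toSet.indicator b x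

/-- The martingale difference `Δ^b_Q f = ∑_{Q' ∈ ch Q} E^b_{Q'} f − E^b_Q f`. -/
noncomputable def Db (μ : Measure (Fin n → ℝ)) (b f : (Fin n → ℝ) → ℝ) (Q : DyadicCube n) :
    (Fin n → ℝ) → ℝ :=
  fun x => (∑ ε : Fin n → Bool, Eb μ b f (Q.child ε) x) - Eb μ b f Q x

/-- The expectation `E^μ_Q f = (⟨f⟩_Q / ⟨b_Q⟩_Q) b_Q` adapted to an accretive system. -/
noncomputable def Esys (μ : Measure (Fin n → ℝ)) (b : DyadicCube n → (Fin n → ℝ) → ℝ)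
    (f : (Fin n → ℝ) → ℝ) (Q : DyadicCube n) : (Fin n → ℝ) → ℝ :=
  fun x => (avg μ f Q / avg μ (b Q) Q) * b Q x

/-- The martingale difference `Δ^μ_Q` adapted to an accretive system. -/
noncomputable def Dsys (μ : Measure (Fin n → ℝ)) (b : DyadicCube n → (Fin n → ℝ) → ℝ)
    (f : (Fin n → ℝ) → ℝ) (Q : DyadicCube n) : (Fin n → ℝ) → ℝ :=
  fun x => (∑ ε : Fin n → Bool, Esys μ b f (Q.child ε) x) - Esys μ b f Q x

/-- The (formal) adjoint `(Δ^μ_Q)^*`, given by its explicit formula. -/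
noncomputable def DsysStar (μ : Measure (Fin n → ℝ)) (b : DyadicCube n → (Fin n → ℝ) → ℝ)
    (f : (Fin n → ℝ) → ℝ) (Q : DyadicCube n) : (Fin n → ℝ) → ℝ :=
  fun x => ∑ ε : Fin n → Bool,
    (Q.child ε).toSet.indicator
      (fun _ => avg μ (fun y => b (Q.child ε) y * f y) (Q.child ε)
                  / avg μ (b (Q.child ε)) (Q.child ε)
                - avg μ (fun y => b Q y * f y) Q / avg μ (b Q) Q) x

/-- The set `𝒮_b` of cubes where the accretive system changes between generations. -/
def Sb (b : DyadicCube n → (Fin n → ℝ) → ℝ) : Set (DyadicCube n) :=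
  {Q | b Q ≠ fun x => Q.toSet.indicator (b Q.parent) x}

/-- An `L^∞(μ)`-accretive system with constants `δ` and `C`. -/
structure AccretiveSystem (μ : Measure (Fin n → ℝ)) (b : DyadicCube n → (Fin n → ℝ) → ℝ)
    (δ C : ℝ) : Prop where
  meas : ∀ Q : DyadicCube n, Measurable (b Q)
  supp : ∀ Q : DyadicCube n, ∀ x, x ∉ Q.toSet → b Q x = 0
  bdd : ∀ Q : DyadicCube n, eLpNorm (b Q) ∞ μ ≤ ENNReal.ofReal C
  acc : ∀ Q : DyadicCube n, δ * (μ Q.toSet).toReal ≤ |∫ x in Q.toSet, b Q x ∂μ|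

/-- A family of dyadic cubes is `μ`-sparse (i.e. `μ`-Carleson) with constant `Λ`. -/
def IsSparse (μ : Measure (Fin n → ℝ)) (S : Set (DyadicCube n)) (Λ : ℝ≥0∞) : Prop :=
  ∀ R : DyadicCube n,
    ∑' Q : {Q : DyadicCube n // Q ∈ S ∧ Q.toSet ⊆ R.toSet}, μ Q.1.toSet ≤ Λ * μ R.toSet
/-- **Stopping-time estimate.** For a compactly supported measure `μ` and an
`L^∞(μ)`-accretive system `b̃` with constants `δ < 1 < C`, the maximal cubes `Q ⊊ R` with
`|∫_Q b̃_R dμ| < δ² μ(Q)` satisfy `∑ μ(Q) ≤ τ' μ(R)` for some `τ' < 1` depending only on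
`δ` and `C`. -/
theorem stopping_time_estimate (δ C : ℝ) (hδ0 : 0 < δ) (hδ1 : δ < 1) (hC : 1 < C) :
    ∃ τ' : ℝ≥0∞, τ' < 1 ∧
      ∀ (n : ℕ) (μ : Measure (Fin n → ℝ)),
        (∀ Q : DyadicCube n, μ Q.toSet < ⊤) →
        (∃ K : Set (Fin n → ℝ), IsCompact K ∧ μ Kᶜ = 0) →
        ∀ b : DyadicCube n → (Fin n → ℝ) → ℝ, AccretiveSystem μ b δ C →
        ∀ R : DyadicCube n,
          ∑' Q : {Q : DyadicCube n //
              Q.toSet ⊂ R.toSet ∧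
              |∫ x in Q.toSet, b R x ∂μ| < δ ^ 2 * (μ Q.toSet).toReal ∧
              ∀ Q' : DyadicCube n, Q'.toSet ⊂ R.toSet → Q.toSet ⊆ Q'.toSet →
                |∫ x in Q'.toSet, b R x ∂μ| < δ ^ 2 * (μ Q'.toSet).toReal →
                Q'.toSet = Q.toSet},
            μ Q.1.toSet ≤ τ' * μ R.toSet := by
  have hCδ2 : (0:ℝ) < C - δ^2 := by nlinarith
  refine ⟨ENNReal.ofReal ((C - δ)/(C - δ^2)), ?_, ?_⟩
  · rw [← ENNReal.ofReal_one]
    exact ENNReal.ofReal_lt_ofReal_iff_of_nonneg (div_nonneg (by nlinarith) hCδ2.le) |>.mpr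
      ((div_lt_one hCδ2).mpr (by nlinarith))
  intro n μ hfin _hsupp b hb R
  have hτ0 : (0:ℝ) ≤ (C - δ) / (C - δ^2) := by
    apply div_nonneg (by nlinarith) hCδ2.le
  set ι := {Q : DyadicCube n //
      Q.toSet ⊂ R.toSet ∧
      |∫ x in Q.toSet, b R x ∂μ| < δ ^ 2 * (μ Q.toSet).toReal ∧
      ∀ Q' : DyadicCube n, Q'.toSet ⊂ R.toSet → Q.toSet ⊆ Q'.toSet →
        |∫ x in Q'.toSet, b R x ∂μ| < δ ^ 2 * (μ Q'.toSet).toReal →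
        Q'.toSet = Q.toSet} with hι
  -- disjointness
  have hdisj : Pairwise (Function.onFun Disjoint (fun Q : ι => Q.1.toSet)) := by
    intro i j hij
    rw [Function.onFun]
    by_contra hnd
    obtain ⟨x, hxi, hxj⟩ := Set.not_disjoint_iff.mp hnd
    have hne : Nonempty (Fin n) := by
      by_contra hn
      rw [not_nonempty_iff] at hn
      have hsub : R.toSet ⊆ i.1.toSet := fun y _ k => isEmptyElim k
      exact i.2.1.ne (Set.Subset.antisymm i.2.1.subset hsub)
    haveI := hne
    have key : ∀ (a c : ι), a.1.k ≤ c.1.k → x ∈ a.1.toSet → x ∈ c.1.toSet → a = c := by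
      intro a c hk hxa hxc
      have hsub := DyadicCube.toSet_nest hk hxa hxc
      have heq := a.2.2.2 c.1 c.2.1 hsub c.2.2.1
      exact Subtype.ext (DyadicCube.toSet_inj hxa heq.symm)
    rcases le_total i.1.k j.1.k with h | h
    · exact hij (key i j h hxi hxj)
    · exact hij ((key j i h hxj hxi).symm)
  have hmQ : ∀ Q : ι, MeasurableSet Q.1.toSet := fun Q => Q.1.measurableSet_toSet
  set T := ⋃ Q : ι, Q.1.toSet with hT
  have hmT : MeasurableSet T := MeasurableSet.iUnion hmQ
  have hTsub : T ⊆ R.toSet := Set.iUnion_subset fun Q => Q.2.1.subset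
  have hμT : μ T = ∑' Q : ι, μ Q.1.toSet := measure_iUnion hdisj hmQ
  have hμTfin : μ T < ⊤ := lt_of_le_of_lt (measure_mono hTsub) (hfin R)
  -- boundedness a.e.
  have hCpos : (0:ℝ) ≤ C := by linarith
  have hbae : ∀ᵐ y ∂μ, ‖b R y‖ ≤ C := by
    have h1 : ∀ᵐ y ∂μ, (‖b R y‖₊ : ℝ≥0∞) ≤ eLpNormEssSup (b R) μ := ae_le_eLpNormEssSup
    have h2 : eLpNormEssSup (b R) μ ≤ ENNReal.ofReal C := by
      rw [← eLpNorm_exponent_top]; exact hb.bdd R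
    filter_upwards [h1] with y hy
    have h3 : (‖b R y‖₊ : ℝ≥0∞) ≤ ENNReal.ofReal C := hy.trans h2
    rw [← enorm_eq_nnnorm, ← ofReal_norm] at h3
    exact (ENNReal.ofReal_le_ofReal_iff hCpos).mp h3
  have hint : IntegrableOn (b R) R.toSet μ :=
    μ.integrableOn_of_bounded (hfin R).ne (hb.meas R).aestronglyMeasurable
      (ae_restrict_of_ae hbae)
  have hintT : IntegrableOn (b R) T μ := hint.mono_set hTsub
  have hintD : IntegrableOn (b R) (R.toSet \ T) μ := hint.mono_set Set.diff_subset
  -- split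
  have hunion : T ∪ (R.toSet \ T) = R.toSet := Set.union_diff_cancel hTsub
  have hdisjTD : Disjoint T (R.toSet \ T) := Set.disjoint_sdiff_right
  have hsplit : ∫ x in R.toSet, b R x ∂μ
      = (∫ x in T, b R x ∂μ) + ∫ x in R.toSet \ T, b R x ∂μ := by
    have h := setIntegral_union hdisjTD (R.measurableSet_toSet.diff hmT) hintT hintD
    rw [hunion] at h
    exact h
  have hiU : ∫ x in T, b R x ∂μ = ∑' Q : ι, ∫ x in Q.1.toSet, b R x ∂μ :=
    integral_iUnion hmQ hdisj hintT
  -- real quantities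
  set r := (μ R.toSet).toReal with hr
  set mT := (μ T).toReal with hmTr
  set mD := (μ (R.toSet \ T)).toReal with hmDr
  have hμDfin : μ (R.toSet \ T) < ⊤ :=
    lt_of_le_of_lt (measure_mono Set.diff_subset) (hfin R)
  have hadd : mT + mD = r := by
    rw [hmTr, hmDr, hr, ← ENNReal.toReal_add hμTfin.ne hμDfin.ne,
      ← measure_union hdisjTD (R.measurableSet_toSet.diff hmT), hunion]
  have hQfin : ∀ Q : ι, μ Q.1.toSet ≠ ⊤ :=
    fun Q => (lt_of_le_of_lt (measure_mono Q.2.1.subset) (hfin R)).ne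
  have htsumfin : ∑' Q : ι, μ Q.1.toSet ≠ ⊤ := by rw [← hμT]; exact hμTfin.ne
  have hsummT : ∑' Q : ι, (μ Q.1.toSet).toReal = mT := by
    rw [← ENNReal.tsum_toReal_eq hQfin, ← hμT]
  have hsummable : Summable (fun Q : ι => (μ Q.1.toSet).toReal) :=
    ENNReal.summable_toReal htsumfin
  have hle : ∀ Q : ι, ‖∫ x in Q.1.toSet, b R x ∂μ‖ ≤ δ^2 * (μ Q.1.toSet).toReal :=
    fun Q => by rw [Real.norm_eq_abs]; exact Q.2.2.1.le
  have hnormsum : Summable (fun Q : ι => ‖∫ x in Q.1.toSet, b R x ∂μ‖) :=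
    Summable.of_nonneg_of_le (fun Q => norm_nonneg _) hle (hsummable.mul_left (δ^2))
  have h1 : |∫ x in T, b R x ∂μ| ≤ δ^2 * mT := by
    rw [hiU, ← Real.norm_eq_abs]
    calc ‖∑' Q : ι, ∫ x in Q.1.toSet, b R x ∂μ‖
        ≤ ∑' Q : ι, ‖∫ x in Q.1.toSet, b R x ∂μ‖ := norm_tsum_le_tsum_norm hnormsum
      _ ≤ ∑' Q : ι, δ^2 * (μ Q.1.toSet).toReal :=
          hnormsum.tsum_le_tsum hle (hsummable.mul_left _)
      _ = δ^2 * mT := by rw [tsum_mul_left, hsummT]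
  have h2 : |∫ x in R.toSet \ T, b R x ∂μ| ≤ C * mD := by
    rw [← Real.norm_eq_abs]
    exact norm_setIntegral_le_of_norm_le_const_ae hμDfin (ae_restrict_of_ae hbae)
  have haccR : δ * r ≤ |∫ x in R.toSet, b R x ∂μ| := hb.acc R
  have hRb : |∫ x in R.toSet, b R x ∂μ| ≤ δ^2 * mT + C * mD := by
    rw [hsplit]
    exact (abs_add_le _ _).trans (add_le_add h1 h2)
  have hmain : mT ≤ (C - δ)/(C - δ^2) * r := by
    rw [div_mul_eq_mul_div, le_div_iff₀ hCδ2]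
    nlinarith [haccR.trans hRb]
  calc ∑' Q : ι, μ Q.1.toSet = μ T := hμT.symm
    _ = ENNReal.ofReal mT := (ENNReal.ofReal_toReal hμTfin.ne).symm
    _ ≤ ENNReal.ofReal ((C - δ)/(C - δ^2) * r) := ENNReal.ofReal_le_ofReal hmain
    _ = ENNReal.ofReal ((C - δ)/(C - δ^2)) * μ R.toSet := by
        rw [ENNReal.ofReal_mul hτ0, hr, ENNReal.ofReal_toReal (hfin R).ne]
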